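/- For all integers n ≥ 0 and s ≥ 0, the number of full binary trees with n internal vertices and Horton–Strahler number s equals the number of Dyck paths of length 2n whose height H satisfies ⌊log₂(1 + H)⌋ = s. -/

import Mathlib

/-- Words over the alphabet {1,2}, encoded as lists of booleans (`false` = 1, `true` = 2). -/
abbrev Word := List Bool

/-- Longest common prefix of two words (`u ∧ v`). -/
def lcp : Word → Word → Word
  | a :: as, b :: bs => if a = b then a :: lcp as bs else []
  | _, _ => []

/-- The lexicographic (strict) order on words; a strict prefix is smaller. -/
def wlex (u v : Word) : Prop := List.Lex (· < ·) u v

/-- A binary tree: a finite, prefix-closed set of words containing the empty word. -/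
def IsBinaryTree (t : Set Word) : Prop :=
  t.Finite ∧ ([] : Word) ∈ t ∧ ∀ u ∈ t, ∀ v : Word, v <+: u → v ∈ t

/-- Fullness: each vertex has either zero or two children. -/
def IsFull (t : Set Word) : Prop :=
  ∀ u ∈ t, (u ++ [false] ∈ t ↔ u ++ [true] ∈ t)

def IsFullBinaryTree (t : Set Word) : Prop := IsBinaryTree t ∧ IsFull t

/-- `φ` is an embedding of `t` into `t'`: injective on `t`, strictly increasing for the
lexicographic order, and preserving longest common prefixes. -/
def IsEmbedding (t t' : Set Word) (φ : Word → Word) : Prop :=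
  (∀ u ∈ t, φ u ∈ t') ∧
  (∀ u ∈ t, ∀ v ∈ t, u ≠ v → φ u ≠ φ v) ∧
  (∀ u ∈ t, ∀ v ∈ t, wlex u v → wlex (φ u) (φ v)) ∧
  (∀ u ∈ t, ∀ v ∈ t, φ (lcp u v) = lcp (φ u) (φ v))

/-- `t` can be embedded in `t'`. -/
def Embeds (t t' : Set Word) : Prop := ∃ φ, IsEmbedding t t' φ

/-- `graft b t = b · t`, the copy of `t` rooted at the child `b` of the root. -/
def graft (b : Bool) (t : Set Word) : Set Word := (fun w => b :: w) '' t

/-- The interpolating trees: τ₀ = {∅}, τ₁ = {∅,1,2},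
τ_{2m} = {∅} ∪ 1·τ_m ∪ 2·τ_{m-1}, τ_{2m+1} = {∅} ∪ 1·τ_m ∪ 2·τ_m (for m ≥ 1). -/
def tau : ℕ → Set Word
  | 0 => {[]}
  | 1 => {[], [false], [true]}
  | n + 2 => {[]} ∪ graft false (tau ((n + 2) / 2)) ∪ graft true (tau ((n + 1) / 2))
termination_by n => n
decreasing_by all_goals omega

/-- The subtree of `t` rooted at `u`: θ_u t = {v : uv ∈ t}. -/
def subtreeAt (u : Word) (t : Set Word) : Set Word := {v | u ++ v ∈ t}

/-- The refined Horton–Strahler number S(t) = max {r : τ_r embeds in t}. -/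
noncomputable def RHS (t : Set Word) : ℕ := sSup {r | Embeds (tau r) t}

/-- S_u(t) = S(θ_u t). -/
noncomputable def Sv (u : Word) (t : Set Word) : ℕ := RHS (subtreeAt u t)

/-- The set of internal vertices of `t` (those having a child in `t`). -/
def internals (t : Set Word) : Set Word :=
  {u | u ∈ t ∧ (u ++ [false] ∈ t ∨ u ++ [true] ∈ t)}

/-- A Dyck path of length `2n`: `d 0 = 0`, steps of `±1` on `[0, 2n]`, `d (2n) = 0`;
by convention the path is extended by zero beyond time `2n`. -/
def IsDyck (n : ℕ) (d : ℕ → ℕ) : Prop :=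
  d 0 = 0 ∧ (∀ i, 2 * n ≤ i → d i = 0) ∧
  ∀ i < 2 * n, d (i + 1) = d i + 1 ∨ d i = d (i + 1) + 1

/-- The height ‖d‖ of a (zero-extended) Dyck path. -/
noncomputable def height (d : ℕ → ℕ) : ℕ := sSup (Set.range d)

/-- The `j`-th spinal subpath of `d`: `d_j^spn (i) = |d(ρ_j + 1 + i) − m| − 1` for
`i ∈ [0, ρ_{j+1} − ρ_j − 2]`, extended by zero (here `(a - b) + (b - a) = |a - b|` in ℕ). -/
def dspn (d : ℕ → ℕ) (m : ℕ) (ρ : ℕ → ℕ) (j : ℕ) : ℕ → ℕ := fun i =>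
  if i ≤ ρ (j + 1) - ρ j - 2
  then (d (ρ j + 1 + i) - m) + (m - d (ρ j + 1 + i)) - 1 else 0

/-- The complete binary tree of height `s`: all words of length at most `s`. -/
def cb (s : ℕ) : Set Word := {u | u.length ≤ s}

/-- The Horton–Strahler number of `t`: the largest `s` such that `cb s` embeds in `t`. -/
noncomputable def HS (t : Set Word) : ℕ := sSup {s | Embeds (cb s) t}

/-!
Full binary trees are the word-set encodings of the inductive binary trees `BinaryTree Unit`. An
embedding of `cb (s + 1)` either lands inside one subtree of the root or restricts to embeddings
of `cb s` into both subtrees, so the Horton–Strahler number obeys the classical recursion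
`strahler`. Dyck words correspond to binary trees through the first-return decomposition
`p = x.nest + y`, under which the height of `p` becomes `leftHeight` (`max (h x + 1) (h y)`).
Both sides thus count binary trees with `n` nodes, and it suffices to compare generating
functions. The series `A s` of trees with Strahler number at most `s` satisfies
`A (s+1) = 1 + X (2 A (s+1) A s - (A s)²)`, while the series `C h` of trees with `leftHeight` at
most `h` satisfies `C (h+1) = 1 + X C h C (h+1)`, whence `C h = F (h+1) / F (h+2)` for the
polynomials `F (k+2) = F (k+1) - X F k`. The doubling formulas for `F` show that `C (2m+2)`
satisfies the Strahler recursion with `C m` in place of `A s`, so `A s = C (2^(s+1) - 2)`.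
Finally `⌊log₂ (1 + H)⌋ = s` exactly when `2^s - 2 < H ≤ 2^(s+1) - 2`.
-/

section Embeddings

variable {A B C t : Set Word} {f g : Word → Word} {s : ℕ}

@[simp] lemma lcp_nil_left (v : Word) : lcp [] v = [] := by cases v <;> rfl

@[simp] lemma lcp_nil_right (u : Word) : lcp u [] = [] := by cases u <;> rfl

@[simp] lemma lcp_cons_cons (a b : Bool) (u v : Word) :
    lcp (a :: u) (b :: v) = if a = b then a :: lcp u v else [] := rfl

lemma lcp_prefix_left : ∀ u v : Word, lcp u v <+: u
  | [], _ => by simp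
  | _ :: _, [] => by simp
  | a :: u, b :: v => by
    by_cases h : a = b
    · simpa [h] using lcp_prefix_left u v
    · simp [h]

lemma lcp_comm : ∀ u v : Word, lcp u v = lcp v u
  | [], _ => by simp
  | _ :: _, [] => by simp
  | a :: u, b :: v => by
    by_cases h : a = b
    · simp [h, lcp_comm u v]
    · simp [h, Ne.symm h]

lemma lcp_prefix_right (u v : Word) : lcp u v <+: v := lcp_comm u v ▸ lcp_prefix_left v u

lemma lcp_eq_left_of_prefix {u v : Word} (h : u <+: v) : lcp u v = u := by
  induction u generalizing v with
  | nil => simp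
  | cons a u ih =>
    obtain ⟨w, rfl⟩ := h
    simp [ih (List.prefix_append u w)]

@[simp] lemma mem_cb {u : Word} : u ∈ cb s ↔ u.length ≤ s := Iff.rfl

lemma subtreeAt_cb_succ (b : Bool) : subtreeAt [b] (cb (s + 1)) = cb s := by
  ext u
  simp [subtreeAt]

lemma IsEmbedding.comp (hg : IsEmbedding B C g) (hf : IsEmbedding A B f) :
    IsEmbedding A C (g ∘ f) := by
  obtain ⟨hf₁, hf₂, hf₃, hf₄⟩ := hf
  obtain ⟨hg₁, hg₂, hg₃, hg₄⟩ := hg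
  refine ⟨fun u hu => hg₁ _ (hf₁ u hu), fun u hu v hv huv => ?_, fun u hu v hv huv => ?_,
    fun u hu v hv => ?_⟩
  · exact hg₂ _ (hf₁ u hu) _ (hf₁ v hv) (hf₂ u hu v hv huv)
  · exact hg₃ _ (hf₁ u hu) _ (hf₁ v hv) (hf₃ u hu v hv huv)
  · simp only [Function.comp_apply, hf₄ u hu v hv, hg₄ _ (hf₁ u hu) _ (hf₁ v hv)]

lemma isEmbedding_cons (b : Bool) (t : Set Word) : IsEmbedding (subtreeAt [b] t) t (b :: ·) :=
  ⟨fun _ hu => hu, fun _ _ _ _ huv h => huv (List.cons_injective h),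
    fun _ _ _ _ huv => List.Lex.cons huv, fun _ _ _ _ => by simp⟩

lemma IsEmbedding.prefix (hf : IsEmbedding A B f) {u v : Word} (hu : u ∈ A) (hv : v ∈ A)
    (huv : u <+: v) : f u <+: f v := by
  rw [← lcp_eq_left_of_prefix huv, hf.2.2.2 u hu v hv]
  exact lcp_prefix_right _ _

lemma IsEmbedding.tail {c : Bool} (hf : IsEmbedding A t f) (hc : ∀ u ∈ A, ∃ w, f u = c :: w) :
    IsEmbedding A (subtreeAt [c] t) (fun u => (f u).tail) := by
  choose w hw using hc
  obtain ⟨hf₁, hf₂, hf₃, hf₄⟩ := hf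
  refine ⟨fun u hu => ?_, fun u hu v hv huv h => ?_, fun u hu v hv huv => ?_, fun u hu v hv => ?_⟩
  · simpa [subtreeAt, hw u hu] using hf₁ u hu
  · exact hf₂ u hu v hv huv (by simpa [hw u hu, hw v hv] using h)
  · simpa [wlex, hw u hu, hw v hv, List.lex_cons_iff] using hf₃ u hu v hv huv
  · simp [hf₄ u hu v hv, hw u hu, hw v hv]

lemma Embeds.of_subtreeAt {b : Bool} (h : Embeds A (subtreeAt [b] t)) : Embeds A t :=
  let ⟨_, hφ⟩ := h
  ⟨_, (isEmbedding_cons b t).comp hφ⟩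

lemma embeds_cb_zero (h : ([] : Word) ∈ t) : Embeds (cb 0) t := by
  refine ⟨fun _ => [], fun _ _ => h, fun u hu v hv huv => ?_, fun u hu v hv huv => ?_,
    fun _ _ _ _ => by simp⟩
  all_goals simp only [mem_cb, nonpos_iff_eq_zero, List.length_eq_zero_iff] at hu hv; subst hu hv
  · exact absurd rfl huv
  · exact absurd huv List.not_lex_nil

lemma not_embeds_empty (h : ([] : Word) ∈ A) : ¬ Embeds A ∅ :=
  fun ⟨_, hφ⟩ => hφ.1 [] h

def graftMaps (φ : Bool → Word → Word) : Word → Word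
  | [] => []
  | b :: u => b :: φ b u

lemma isEmbedding_graftMaps {φ : Bool → Word → Word} (hroot : ([] : Word) ∈ t)
    (hφ : ∀ b, IsEmbedding (cb s) (subtreeAt [b] t) (φ b)) :
    IsEmbedding (cb (s + 1)) t (graftMaps φ) := by
  refine ⟨fun u hu => ?_, fun u hu v hv huv => ?_, fun u hu v hv huv => ?_, fun u hu v hv => ?_⟩
  · rcases u with _ | ⟨b, u⟩
    · exact hroot
    · exact (hφ b).1 u (by simpa using hu)
  · rcases u with _ | ⟨a, u⟩ <;> rcases v with _ | ⟨b, v⟩ <;> simp only [graftMaps, ne_eq,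
      reduceCtorEq, not_false_eq_true, List.cons.injEq, not_and] at huv ⊢
    · exact fun _ => huv trivial
    · rintro rfl
      exact (hφ a).2.1 u (by simpa using hu) v (by simpa using hv) (huv rfl)
  · rcases u with _ | ⟨a, u⟩ <;> rcases v with _ | ⟨b, v⟩
    · exact absurd huv List.not_lex_nil
    · exact List.Lex.nil
    · exact absurd huv List.not_lex_nil
    · rw [wlex, List.cons_lex_cons_iff] at huv
      rcases huv with h | ⟨rfl, h⟩
      · exact List.Lex.rel h
      · exact List.Lex.cons ((hφ a).2.2.1 u (by simpa using hu) v (by simpa using hv) h)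
  · rcases u with _ | ⟨a, u⟩ <;> rcases v with _ | ⟨b, v⟩ <;> simp only [graftMaps, lcp_nil_left,
      lcp_nil_right, lcp_cons_cons]
    by_cases hab : a = b
    · subst hab
      simp [(hφ a).2.2.2 u (by simpa using hu) v (by simpa using hv)]
    · simp [hab]

lemma embeds_cb_succ_of_forall (hroot : ([] : Word) ∈ t)
    (h : ∀ b, Embeds (cb s) (subtreeAt [b] t)) : Embeds (cb (s + 1)) t := by
  choose φ hφ using h
  exact ⟨_, isEmbedding_graftMaps hroot hφ⟩

lemma isEmbedding_cons_cb (b : Bool) : IsEmbedding (cb s) (cb (s + 1)) (b :: ·) :=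
  subtreeAt_cb_succ (s := s) b ▸ isEmbedding_cons b (cb (s + 1))

lemma IsEmbedding.exists_cons_of_prefix (hf : IsEmbedding A B f) {u v : Word} (hu : u ∈ A)
    (hv : v ∈ A) (huv : u <+: v) {c : Bool} {w : Word} (hc : f u = c :: w) :
    ∃ w', f v = c :: w' := by
  obtain ⟨w', hw'⟩ := hf.prefix hu hv huv
  exact ⟨w ++ w', by rw [← hw', hc, List.cons_append]⟩

lemma IsEmbedding.apply_singleton_of_apply_nil (hf : IsEmbedding (cb (s + 1)) t f) (h0 : f [] = [])
    (b : Bool) : ∃ w, f [b] = b :: w := by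
  have hnil : ([] : Word) ∈ cb (s + 1) := by simp
  have hsingle : ∀ b : Bool, [b] ∈ cb (s + 1) := by simp
  have hcons : ∀ b : Bool, ∃ c w, f [b] = c :: w := fun b => by
    rcases hb : f [b] with _ | ⟨c, w⟩
    · exact absurd (h0.trans hb.symm) (hf.2.1 [] hnil [b] (hsingle b) (by simp))
    · exact ⟨c, w, rfl⟩
  obtain ⟨c₀, w₀, h₀⟩ := hcons false
  obtain ⟨c₁, w₁, h₁⟩ := hcons true
  have hlcp : lcp (f [false]) (f [true]) = [] := by
    rw [← hf.2.2.2 _ (hsingle false) _ (hsingle true)]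
    exact h0
  have hlex : wlex (f [false]) (f [true]) :=
    hf.2.2.1 _ (hsingle false) _ (hsingle true) (List.Lex.rel (by decide))
  rw [h₀, h₁] at hlcp hlex
  rw [wlex, List.cons_lex_cons_iff] at hlex
  cases b <;> cases c₀ <;> cases c₁ <;> simp_all [Bool.lt_iff]

lemma embeds_cb_succ_cases (h : Embeds (cb (s + 1)) t) :
    (∃ b, Embeds (cb (s + 1)) (subtreeAt [b] t)) ∨ ∀ b, Embeds (cb s) (subtreeAt [b] t) := by
  obtain ⟨φ, hφ⟩ := h
  have hnil : ([] : Word) ∈ cb (s + 1) := by simp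
  cases h0 : φ [] with
  | cons c w =>
    exact Or.inl ⟨c, _, hφ.tail fun u hu => hφ.exists_cons_of_prefix hnil hu List.nil_prefix h0⟩
  | nil =>
    refine Or.inr fun b => ?_
    obtain ⟨w, hw⟩ := hφ.apply_singleton_of_apply_nil h0 b
    have hcons := isEmbedding_cons_cb (s := s) b
    refine ⟨_, (hφ.comp hcons).tail fun u hu => ?_⟩
    exact hφ.exists_cons_of_prefix (by simp) (hcons.1 u hu) (by simp) hw

theorem embeds_cb_succ_iff (hroot : ([] : Word) ∈ t) :
    Embeds (cb (s + 1)) t ↔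
      (∃ b, Embeds (cb (s + 1)) (subtreeAt [b] t)) ∨ ∀ b, Embeds (cb s) (subtreeAt [b] t) :=
  ⟨embeds_cb_succ_cases, fun h => h.elim (fun ⟨_, hb⟩ => hb.of_subtreeAt)
    (embeds_cb_succ_of_forall hroot)⟩

end Embeddings

section BinaryTrees

open BinaryTree

variable {A B t : Set Word}

def wordNode (A B : Set Word) : Set Word := insert [] (graft false A ∪ graft true B)

@[simp] lemma nil_mem_wordNode : ([] : Word) ∈ wordNode A B := Set.mem_insert _ _

@[simp] lemma cons_mem_wordNode {b : Bool} {w : Word} :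
    b :: w ∈ wordNode A B ↔ w ∈ cond b B A := by
  cases b <;> simp [wordNode, graft]

@[simp] lemma subtreeAt_wordNode (b : Bool) : subtreeAt [b] (wordNode A B) = cond b B A := by
  ext w
  exact cons_mem_wordNode

lemma wordNode_subtreeAt (hroot : ([] : Word) ∈ t) :
    wordNode (subtreeAt [false] t) (subtreeAt [true] t) = t := by
  ext (_ | ⟨b, w⟩)
  · simpa using hroot
  · exact cons_mem_wordNode.trans (by cases b <;> rfl)

lemma ncard_wordNode (hA : A.Finite) (hB : B.Finite) :
    (wordNode A B).ncard = A.ncard + B.ncard + 1 := by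
  have hdisj : Disjoint (graft false A) (graft true B) := by
    simp [graft, Set.disjoint_left]
  simp only [wordNode, graft] at hdisj ⊢
  rw [Set.ncard_insert_of_notMem (by simp) ((hA.image _).union (hB.image _)),
    Set.ncard_union_eq hdisj (hA.image _) (hB.image _),
    Set.ncard_image_of_injective _ List.cons_injective,
    Set.ncard_image_of_injective _ List.cons_injective]

lemma internals_wordNode (h : ([] : Word) ∈ A ∨ ([] : Word) ∈ B) :
    internals (wordNode A B) = wordNode (internals A) (internals B) := by
  ext (_ | ⟨b, w⟩)
  · simpa [internals] using h
  · cases b <;> simp [internals]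

lemma IsFullBinaryTree.wordNode (hA : IsFullBinaryTree A) (hB : IsFullBinaryTree B) :
    IsFullBinaryTree (wordNode A B) := by
  obtain ⟨⟨hAfin, hAroot, hApre⟩, hAfull⟩ := hA
  obtain ⟨⟨hBfin, hBroot, hBpre⟩, hBfull⟩ := hB
  refine ⟨⟨(((hAfin.image _).union (hBfin.image _)).insert _), nil_mem_wordNode, ?_⟩, ?_⟩
  · rintro (_ | ⟨b, u⟩) hu (_ | ⟨c, v⟩) hvu
    · exact nil_mem_wordNode
    · simp at hvu
    · exact nil_mem_wordNode
    · obtain ⟨rfl, hvu'⟩ := List.cons_prefix_cons.mp hvu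
      rw [cons_mem_wordNode] at hu ⊢
      cases c
      · exact hApre u hu v hvu'
      · exact hBpre u hu v hvu'
  · rintro (_ | ⟨b, u⟩) hu
    · simp [hAroot, hBroot]
    · simp only [List.cons_append, cons_mem_wordNode] at hu ⊢
      cases b
      · exact hAfull u hu
      · exact hBfull u hu

lemma IsFullBinaryTree.subtreeAt {b : Bool} (ht : IsFullBinaryTree t) (hb : [b] ∈ t) :
    IsFullBinaryTree (subtreeAt [b] t) := by
  obtain ⟨⟨hfin, -, hpre⟩, hfull⟩ := ht
  refine ⟨⟨hfin.preimage List.cons_injective.injOn, hb, fun u hu v hvu => ?_⟩, fun u hu => ?_⟩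
  · exact hpre _ hu _ (List.cons_prefix_cons.mpr ⟨rfl, hvu⟩)
  · exact hfull (b :: u) hu

lemma IsFullBinaryTree.singleton_mem (ht : IsFullBinaryTree t) (hne : t ≠ {[]}) (b : Bool) :
    [b] ∈ t := by
  obtain ⟨⟨-, hroot, hpre⟩, hfull⟩ := ht
  obtain ⟨_ | ⟨c, w⟩, hw, hne⟩ := Set.exists_of_ssubset
    ((Set.singleton_subset_iff.mpr hroot).ssubset_of_ne hne.symm)
  · simp at hne
  · have hc : [c] ∈ t := hpre _ hw [c] (List.cons_prefix_cons.mpr ⟨rfl, List.nil_prefix⟩)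
    have h := hfull [] hroot
    cases b <;> cases c <;> simp_all

def toWordSet : BinaryTree Unit → Set Word
  | nil => {[]}
  | node _ l r => wordNode (toWordSet l) (toWordSet r)

lemma nil_mem_toWordSet (T : BinaryTree Unit) : ([] : Word) ∈ toWordSet T := by
  cases T <;> simp [toWordSet]

lemma isFullBinaryTree_toWordSet (T : BinaryTree Unit) : IsFullBinaryTree (toWordSet T) := by
  induction T with
  | nil =>
    refine ⟨⟨Set.finite_singleton _, rfl, fun u hu v hvu => ?_⟩, fun u hu => ?_⟩ <;>
      simp_all [toWordSet]
  | node _ l r ihl ihr => exact ihl.wordNode ihr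

lemma ncard_internals_toWordSet (T : BinaryTree Unit) :
    (internals (toWordSet T)).ncard = T.numNodes := by
  induction T with
  | nil => simp [toWordSet, internals]
  | node _ l r ihl ihr =>
    have hfin : ∀ T, (internals (toWordSet T)).Finite := fun T =>
      (isFullBinaryTree_toWordSet T).1.1.subset fun _ h => h.1
    rw [toWordSet, internals_wordNode (Or.inl (nil_mem_toWordSet l)),
      ncard_wordNode (hfin l) (hfin r), ihl, ihr, numNodes]

lemma toWordSet_ne_singleton (a : Unit) (l r : BinaryTree Unit) :
    toWordSet (node a l r) ≠ {[]} := fun h => by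
  simpa [h] using (show [false] ∈ toWordSet (node a l r) by simp [toWordSet, nil_mem_toWordSet])

lemma toWordSet_injective : Function.Injective toWordSet := by
  intro T₁ T₂ h
  induction T₁ generalizing T₂ with
  | nil =>
    cases T₂ with
    | nil => rfl
    | node a l r => exact absurd h.symm (toWordSet_ne_singleton a l r)
  | node a l r ihl ihr =>
    cases T₂ with
    | nil => exact absurd h (toWordSet_ne_singleton a l r)
    | node _ l' r' =>
      have hsub := fun b => congrArg (subtreeAt [b]) h
      simp only [toWordSet, subtreeAt_wordNode] at hsub
      rw [ihl (hsub false), ihr (hsub true)]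

lemma exists_toWordSet_eq (ht : IsFullBinaryTree t) : ∃ T, toWordSet T = t := by
  induction hn : t.ncard using Nat.strong_induction_on generalizing t with
  | _ n ih =>
    by_cases hne : t = {[]}
    · exact ⟨nil, hne.symm⟩
    have hsub : ∀ b, IsFullBinaryTree (subtreeAt [b] t) :=
      fun b => ht.subtreeAt (ht.singleton_mem hne b)
    have hcard := ncard_wordNode (hsub false).1.1 (hsub true).1.1
    rw [wordNode_subtreeAt ht.1.2.1] at hcard
    obtain ⟨l, hl⟩ := ih _ (by omega) (hsub false) rfl
    obtain ⟨r, hr⟩ := ih _ (by omega) (hsub true) rfl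
    exact ⟨node () l r, by rw [toWordSet, hl, hr, wordNode_subtreeAt ht.1.2.1]⟩

def strahler : BinaryTree Unit → ℕ
  | nil => 0
  | node _ l r =>
    if strahler l = strahler r then strahler l + 1 else max (strahler l) (strahler r)

lemma embeds_cb_toWordSet_iff (T : BinaryTree Unit) (s : ℕ) :
    Embeds (cb s) (toWordSet T) ↔ s ≤ strahler T := by
  induction T generalizing s with
  | nil =>
    cases s with
    | zero => exact iff_of_true (embeds_cb_zero rfl) le_rfl
    | succ s =>
      have hempty : ∀ b : Bool, subtreeAt [b] (toWordSet nil) = ∅ := fun b => by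
        ext; simp [subtreeAt, toWordSet]
      simp [embeds_cb_succ_iff (nil_mem_toWordSet nil), hempty, not_embeds_empty, strahler]
  | node a l r ihl ihr =>
    cases s with
    | zero => exact iff_of_true (embeds_cb_zero (nil_mem_toWordSet _)) (Nat.zero_le _)
    | succ s =>
      rw [embeds_cb_succ_iff (nil_mem_toWordSet _)]
      simp only [toWordSet, subtreeAt_wordNode, Bool.exists_bool, Bool.forall_bool, cond_false,
        cond_true, ihl, ihr, strahler]
      split_ifs <;> omega

theorem HS_toWordSet (T : BinaryTree Unit) : HS (toWordSet T) = strahler T := by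
  simp only [HS, embeds_cb_toWordSet_iff]
  exact csSup_Iic

noncomputable def fullBinaryTreeEquiv : BinaryTree Unit ≃ {t : Set Word // IsFullBinaryTree t} :=
  Equiv.ofBijective (fun T => ⟨toWordSet T, isFullBinaryTree_toWordSet T⟩)
    ⟨fun _ _ h => toWordSet_injective (congrArg Subtype.val h),
      fun ⟨_, ht⟩ => (exists_toWordSet_eq ht).imp fun _ hT => Subtype.ext hT⟩

@[simp] lemma coe_fullBinaryTreeEquiv (T : BinaryTree Unit) :
    (fullBinaryTreeEquiv T : Set Word) = toWordSet T := rfl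

lemma card_fullBinaryTree_eq_card_binaryTree (n s : ℕ) :
    Nat.card {t : Set Word // IsFullBinaryTree t ∧ (internals t).ncard = n ∧ HS t = s} =
      Nat.card {T : BinaryTree Unit // T.numNodes = n ∧ strahler T = s} :=
  Nat.card_congr <| (Equiv.subtypeSubtypeEquivSubtypeInter _ _).symm.trans
    (fullBinaryTreeEquiv.subtypeEquiv fun T => by
      simp [ncard_internals_toWordSet, HS_toWordSet]).symm

end BinaryTrees

section GeneratingFunctions

open BinaryTree PowerSeries Finset

noncomputable def treeGF (P : BinaryTree Unit → Prop) : PowerSeries ℤ :=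
  PowerSeries.mk fun n => Nat.card {T : BinaryTree Unit // T.numNodes = n ∧ P T}

lemma coeff_treeGF (n : ℕ) (P : BinaryTree Unit → Prop) [DecidablePred P] :
    coeff n (treeGF P) = #{T ∈ treesOfNumNodesEq n | P T} := by
  rw [treeGF, coeff_mk, ← Set.ncard_coe_finset, ← Nat.card_coe_set_eq]
  congr
  ext
  simp

lemma treeGF_congr {P Q : BinaryTree Unit → Prop} (h : ∀ T, P T ↔ Q T) :
    treeGF P = treeGF Q := by
  rw [funext fun T => propext (h T)]

lemma treeGF_or {P Q : BinaryTree Unit → Prop} (h : ∀ T, P T → ¬ Q T) :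
    treeGF (fun T => P T ∨ Q T) = treeGF P + treeGF Q := by
  classical
  ext n
  simp only [coeff_treeGF, map_add, filter_or]
  rw [card_union_of_disjoint (disjoint_filter.mpr fun T _ => h T)]
  push_cast
  rfl

lemma treeGF_and_not {P Q : BinaryTree Unit → Prop} (h : ∀ T, P T → Q T) :
    treeGF (fun T => Q T ∧ ¬ P T) = treeGF Q - treeGF P := by
  rw [eq_sub_iff_add_eq, add_comm, ← treeGF_or fun T hP hQ => hQ.2 hP]
  exact treeGF_congr fun T => by by_cases hP : P T <;> simp [hP, h T]

lemma treeGF_eq_nil : treeGF (· = nil) = 1 := by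
  classical
  ext (_ | n)
  · simp [coeff_treeGF, filter_singleton]
  · rw [coeff_treeGF, coeff_one, if_neg n.succ_ne_zero, Nat.cast_eq_zero, card_eq_zero,
      filter_eq_empty_iff]
    rintro T hT rfl
    simp at hT

lemma treeGF_node (P Q : BinaryTree Unit → Prop) :
    treeGF (fun T => ∃ l r, T = l △ r ∧ P l ∧ Q r) = X * (treeGF P * treeGF Q) := by
  classical
  ext (_ | n)
  · simp [coeff_treeGF]
  · rw [coeff_treeGF, coeff_succ_X_mul, coeff_mul, treesOfNumNodesEq_succ, filter_biUnion,
      card_biUnion]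
    · push_cast
      refine sum_congr rfl fun ij _ => ?_
      rw [filter_map, card_map, coeff_treeGF, coeff_treeGF, ← Nat.cast_mul, ← card_product,
        ← filter_product]
      congr 2
      ext ⟨l, r⟩
      simp only [mem_filter, mem_product, Function.comp_apply, and_assoc]
      refine and_congr_right fun _ => and_congr_right fun _ => ⟨?_, fun h => ⟨l, r, rfl, h⟩⟩
      rintro ⟨_, _, ⟨⟩, h⟩
      exact h
    · intro ij _ ij' _ hne
      simp only [Function.onFun, disjoint_left, mem_filter, mem_map, mem_product,
        mem_treesOfNumNodesEq]
      rintro _ ⟨⟨⟨l, r⟩, ⟨hl, hr⟩, rfl⟩, -⟩ ⟨⟨⟨l', r'⟩, ⟨hl', hr'⟩, he⟩, -⟩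
      obtain ⟨rfl, rfl⟩ := he
      exact hne (Prod.ext (hl.symm.trans hl') (hr.symm.trans hr'))

def leftHeight : BinaryTree Unit → ℕ
  | nil => 0
  | node _ l r => max (leftHeight l + 1) (leftHeight r)

noncomputable def strahlerGF (s : ℕ) : PowerSeries ℤ := treeGF (strahler · ≤ s)

noncomputable def leftHeightGF (h : ℕ) : PowerSeries ℤ := treeGF (leftHeight · ≤ h)

lemma strahlerGF_zero : strahlerGF 0 = 1 := by
  rw [strahlerGF, ← treeGF_eq_nil]
  refine treeGF_congr fun T => ?_
  cases T with
  | nil => simp [strahler]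
  | node _ l r => simp only [strahler, reduceCtorEq, iff_false]; split_ifs <;> omega

lemma leftHeightGF_zero : leftHeightGF 0 = 1 := by
  rw [leftHeightGF, ← treeGF_eq_nil]
  exact treeGF_congr fun T => by cases T <;> simp [leftHeight]

-- The last case is `strahler l = s + 1`, written in the shape that `treeGF_and_not` counts.
lemma strahler_le_succ_iff (T : BinaryTree Unit) (s : ℕ) :
    strahler T ≤ s + 1 ↔ T = nil ∨
      ((∃ l r, T = l △ r ∧ strahler l ≤ s ∧ strahler r ≤ s + 1) ∨
        ∃ l r, T = l △ r ∧ (strahler l ≤ s + 1 ∧ ¬ strahler l ≤ s) ∧ strahler r ≤ s) := by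
  cases T with
  | nil => simp [strahler]
  | node _ l r => simp only [strahler]; split_ifs <;> simp <;> omega

lemma leftHeight_le_succ_iff (T : BinaryTree Unit) (h : ℕ) :
    leftHeight T ≤ h + 1 ↔
      T = nil ∨ ∃ l r, T = l △ r ∧ leftHeight l ≤ h ∧ leftHeight r ≤ h + 1 := by
  cases T <;> simp [leftHeight]

lemma strahlerGF_succ (s : ℕ) :
    strahlerGF (s + 1) =
      1 + X * (2 * strahlerGF (s + 1) * strahlerGF s - strahlerGF s ^ 2) := by
  have h := treeGF_congr (strahler_le_succ_iff · s)
  rw [treeGF_or (by rintro _ rfl (⟨_, _, h, -⟩ | ⟨_, _, h, -⟩) <;> cases h),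
    treeGF_or (by rintro _ ⟨l, r, rfl, hl, -⟩ ⟨_, _, ⟨⟩, hl', -⟩; exact hl'.2 hl),
    treeGF_eq_nil, treeGF_node, treeGF_node, treeGF_and_not fun _ h => h.trans s.le_succ] at h
  simp only [strahlerGF]
  linear_combination h

lemma leftHeightGF_succ (h : ℕ) :
    leftHeightGF (h + 1) = 1 + X * (leftHeightGF h * leftHeightGF (h + 1)) := by
  have e := treeGF_congr (leftHeight_le_succ_iff · h)
  rwa [treeGF_or (by rintro _ rfl ⟨_, _, ⟨⟩, -⟩), treeGF_eq_nil, treeGF_node] at e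

lemma eq_of_eq_one_add_X_mul {R : Type*} [CommRing R] {Y Z a : PowerSeries R}
    (hY : Y = 1 + X * (2 * Y * a - a ^ 2)) (hZ : Z = 1 + X * (2 * Z * a - a ^ 2)) : Y = Z := by
  have hunit : IsUnit (1 - 2 * X * a) := by
    simp [PowerSeries.isUnit_iff_constantCoeff]
  rw [← sub_eq_zero, ← hunit.mul_left_eq_zero]
  linear_combination hY - hZ

noncomputable def fibPoly : ℕ → PowerSeries ℤ
  | 0 => 0
  | 1 => 1
  | k + 2 => fibPoly (k + 1) - X * fibPoly k

lemma isUnit_fibPoly_succ (k : ℕ) : IsUnit (fibPoly (k + 1)) := by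
  rw [PowerSeries.isUnit_iff_constantCoeff]
  induction k with
  | zero => simp [fibPoly]
  | succ k ih => simpa [fibPoly] using ih

lemma leftHeightGF_mul_fibPoly (h : ℕ) : leftHeightGF h * fibPoly (h + 2) = fibPoly (h + 1) := by
  induction h with
  | zero => simp [leftHeightGF_zero, fibPoly]
  | succ h ih =>
    rw [show fibPoly (h + 3) = fibPoly (h + 2) - X * fibPoly (h + 1) from rfl]
    linear_combination fibPoly (h + 2) * leftHeightGF_succ h + X * leftHeightGF (h + 1) * ih

lemma fibPoly_two_mul_add_one_and_two (m : ℕ) :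
    fibPoly (2 * m + 1) = fibPoly (m + 1) ^ 2 - X * fibPoly m ^ 2 ∧
      fibPoly (2 * m + 2) = fibPoly (m + 1) ^ 2 - 2 * X * fibPoly m * fibPoly (m + 1) := by
  induction m with
  | zero => simp [fibPoly]
  | succ m ih =>
    have hodd : fibPoly (2 * m + 3) = fibPoly (m + 2) ^ 2 - X * fibPoly (m + 1) ^ 2 := by
      rw [show fibPoly (2 * m + 3) = fibPoly (2 * m + 2) - X * fibPoly (2 * m + 1) from rfl,
        ih.1, ih.2, show fibPoly (m + 2) = fibPoly (m + 1) - X * fibPoly m from rfl]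
      ring
    refine ⟨hodd, ?_⟩
    rw [show fibPoly (2 * (m + 1) + 2) = fibPoly (2 * m + 3) - X * fibPoly (2 * m + 2) from rfl,
      hodd, ih.2, show fibPoly (m + 2) = fibPoly (m + 1) - X * fibPoly m from rfl]
    ring

lemma leftHeightGF_two_mul_add_two (m : ℕ) :
    leftHeightGF (2 * m + 2) =
      1 + X * (2 * leftHeightGF (2 * m + 2) * leftHeightGF m - leftHeightGF m ^ 2) := by
  have hm := leftHeightGF_mul_fibPoly m
  have h2m := leftHeightGF_mul_fibPoly (2 * m + 2)
  obtain ⟨hodd, heven⟩ := fibPoly_two_mul_add_one_and_two (m + 1)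
  rw [show 2 * (m + 1) + 1 = 2 * m + 2 + 1 by ring] at hodd
  rw [show 2 * (m + 1) + 2 = 2 * m + 2 + 2 by ring] at heven
  have hunit : IsUnit (fibPoly (2 * m + 2 + 2) * fibPoly (m + 2) ^ 2) :=
    (isUnit_fibPoly_succ _).mul ((isUnit_fibPoly_succ _).pow 2)
  -- Clear the denominators of `C m = F (m+1) / F (m+2)` and `C (2m+2) = F (2m+3) / F (2m+4)`.
  rw [← sub_eq_zero, ← hunit.mul_left_eq_zero]
  linear_combination (fibPoly (m + 2) ^ 2 - 2 * X * leftHeightGF m * fibPoly (m + 2) ^ 2) * h2m +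
    (X * fibPoly (2 * m + 2 + 2) * (leftHeightGF m * fibPoly (m + 2) + fibPoly (m + 1)) -
      2 * X * fibPoly (m + 2) * fibPoly (2 * m + 2 + 1)) * hm -
    fibPoly (2 * m + 2 + 1) * heven + fibPoly (2 * m + 2 + 2) * hodd

theorem strahlerGF_eq_leftHeightGF (s : ℕ) : strahlerGF s = leftHeightGF (2 ^ (s + 1) - 2) := by
  induction s with
  | zero => rw [strahlerGF_zero, zero_add, pow_one, Nat.sub_self, leftHeightGF_zero]
  | succ s ih =>
    have hpow : 2 ^ (s + 1 + 1) - 2 = 2 * (2 ^ (s + 1) - 2) + 2 := by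
      have := Nat.one_le_two_pow (n := s)
      rw [pow_succ, pow_succ]
      omega
    refine eq_of_eq_one_add_X_mul (strahlerGF_succ s) ?_
    rw [hpow, ih]
    exact leftHeightGF_two_mul_add_two _

lemma log_two_one_add_eq_iff (H s : ℕ) :
    Nat.log 2 (1 + H) = s ↔ 2 ^ s - 1 ≤ H ∧ H ≤ 2 ^ (s + 1) - 2 := by
  have := Nat.one_le_two_pow (n := s)
  have hpow : 2 ^ (s + 1) = 2 * 2 ^ s := by rw [pow_succ, mul_comm]
  rw [Nat.log_eq_iff (Or.inr ⟨one_lt_two, by omega⟩), hpow]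
  omega

theorem treeGF_strahler_eq (s : ℕ) :
    treeGF (strahler · = s) = treeGF (fun T => Nat.log 2 (1 + leftHeight T) = s) := by
  cases s with
  | zero =>
    have hA : treeGF (strahler · = 0) = strahlerGF 0 := treeGF_congr fun T => by omega
    have hC : treeGF (fun T => Nat.log 2 (1 + leftHeight T) = 0) = leftHeightGF (2 ^ 1 - 2) :=
      treeGF_congr fun T => by rw [log_two_one_add_eq_iff]; omega
    rw [hA, hC, strahlerGF_eq_leftHeightGF]
  | succ s =>
    have := Nat.one_le_two_pow (n := s)
    have hpow : 2 ^ (s + 1 + 1) = 2 * 2 ^ (s + 1) := by rw [pow_succ, mul_comm]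
    have hA : treeGF (strahler · = s + 1) = strahlerGF (s + 1) - strahlerGF s := by
      rw [strahlerGF, strahlerGF, ← treeGF_and_not fun T h => h.trans s.le_succ]
      exact treeGF_congr fun T => by omega
    have hC : treeGF (fun T => Nat.log 2 (1 + leftHeight T) = s + 1) =
        leftHeightGF (2 ^ (s + 1 + 1) - 2) - leftHeightGF (2 ^ (s + 1) - 2) := by
      rw [leftHeightGF, leftHeightGF, ← treeGF_and_not fun T h => h.trans (by omega)]
      exact treeGF_congr fun T => by rw [log_two_one_add_eq_iff]; omega
    rw [hA, hC, strahlerGF_eq_leftHeightGF, strahlerGF_eq_leftHeightGF]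

theorem card_strahler_eq_card_leftHeight (n s : ℕ) :
    Nat.card {T : BinaryTree Unit // T.numNodes = n ∧ strahler T = s} =
      Nat.card {T : BinaryTree Unit // T.numNodes = n ∧ Nat.log 2 (1 + leftHeight T) = s} := by
  simpa [treeGF] using congrArg (coeff n) (treeGF_strahler_eq s)

end GeneratingFunctions

open DyckStep

def stepsOfPath (d : ℕ → ℕ) (n : ℕ) : List DyckStep :=
  (List.range (2 * n)).map fun i => if d i < d (i + 1) then U else D

section StepsOfPath

variable {n : ℕ} {d : ℕ → ℕ}

@[simp] lemma length_stepsOfPath : (stepsOfPath d n).length = 2 * n := by simp [stepsOfPath]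

lemma IsDyck.count_take_stepsOfPath (hd : IsDyck n d) {k : ℕ} (hk : k ≤ 2 * n) :
    ((stepsOfPath d n).take k).count U = ((stepsOfPath d n).take k).count D + d k := by
  induction k with
  | zero => simp [hd.1]
  | succ k ih =>
    rw [List.take_succ_eq_append_getElem (by simp; omega), List.count_append, List.count_append,
      ih (by omega)]
    rcases hd.2.2 k (by omega) with h | h <;> simp [stepsOfPath, h] <;> omega

lemma IsDyck.count_stepsOfPath (hd : IsDyck n d) :
    (stepsOfPath d n).count U = (stepsOfPath d n).count D := by
  have h := hd.count_take_stepsOfPath le_rfl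
  rwa [List.take_of_length_le length_stepsOfPath.le, hd.2.1 _ le_rfl, add_zero] at h

end StepsOfPath

namespace DyckWord

-- Beyond the end of `p` this is `0`, matching the zero extension in `IsDyck`.
def toPath (p : DyckWord) (i : ℕ) : ℕ :=
  (p.toList.take i).count U - (p.toList.take i).count D

variable {p q : DyckWord} {i m n : ℕ} {d : ℕ → ℕ}

@[simp] lemma toPath_zero : (0 : DyckWord).toPath = 0 := by
  funext i
  simp [toPath, show (0 : DyckWord).toList = [] from rfl]

@[simp] lemma toPath_apply_zero (p : DyckWord) : p.toPath 0 = 0 := by simp [toPath]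

lemma toPath_of_length_le (hi : p.toList.length ≤ i) : p.toPath i = 0 := by
  simp [toPath, List.take_of_length_le hi, p.count_U_eq_count_D]

lemma toPath_succ (hi : i < p.toList.length) :
    (p.toList[i] = U ∧ p.toPath (i + 1) = p.toPath i + 1) ∨
      (p.toList[i] = D ∧ p.toPath i = p.toPath (i + 1) + 1) := by
  have hle := p.count_D_le_count_U (i + 1)
  have hle' := p.count_D_le_count_U i
  simp only [toPath, List.take_succ_eq_append_getElem hi, List.count_append] at hle ⊢
  rcases DyckStep.dichotomy p.toList[i] with h | h <;> simp [h] at hle ⊢ <;> omega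

lemma toPath_add_of_le (hi : i ≤ p.toList.length) : (p + q).toPath i = p.toPath i := by
  simp [toPath, show (p + q).toList = p.toList ++ q.toList from rfl,
    List.take_append_of_le_length hi]

lemma toPath_add_of_ge (hi : p.toList.length ≤ i) :
    (p + q).toPath i = q.toPath (i - p.toList.length) := by
  simp only [toPath, show (p + q).toList = p.toList ++ q.toList from rfl, List.take_append,
    List.take_of_length_le hi, List.count_append, p.count_U_eq_count_D]
  omega

lemma toPath_nest_succ (hi : i ≤ p.toList.length) : p.nest.toPath (i + 1) = p.toPath i + 1 := by
  have hle := p.count_D_le_count_U i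
  simp only [toPath, show p.nest.toList = U :: p.toList ++ [D] from rfl, List.cons_append,
    List.take_succ_cons, List.take_append_of_le_length hi, List.count_cons] at hle ⊢
  simp
  omega

lemma forall_toPath_add_le_iff :
    (∀ i, (p + q).toPath i ≤ m) ↔ (∀ i, p.toPath i ≤ m) ∧ ∀ i, q.toPath i ≤ m := by
  refine ⟨fun h => ⟨fun i => ?_, fun i => ?_⟩, fun ⟨hp, hq⟩ i => ?_⟩
  · rcases le_or_gt i p.toList.length with hi | hi
    · exact toPath_add_of_le hi ▸ h i
    · simp [toPath_of_length_le hi.le]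
  · simpa [toPath_add_of_ge] using h (p.toList.length + i)
  · rcases le_or_gt i p.toList.length with hi | hi
    · exact toPath_add_of_le hi ▸ hp i
    · exact toPath_add_of_ge hi.le ▸ hq _

lemma forall_toPath_nest_le_iff : (∀ i, p.nest.toPath i ≤ m) ↔ ∀ i, p.toPath i + 1 ≤ m := by
  have hlen : p.nest.toList.length = p.toList.length + 2 := by simp [nest]
  refine ⟨fun h i => ?_, fun h i => ?_⟩
  · rcases le_or_gt i p.toList.length with hi | hi
    · exact toPath_nest_succ hi ▸ h (i + 1)
    · have h' := h (p.toList.length + 1)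
      rw [toPath_nest_succ le_rfl, toPath_of_length_le le_rfl] at h'
      rwa [toPath_of_length_le hi.le]
  · rcases i with _ | i
    · simp
    · rcases le_or_gt i p.toList.length with hi | hi
      · exact toPath_nest_succ hi ▸ h i
      · simp [toPath_of_length_le (show p.nest.toList.length ≤ i + 1 by omega)]

def ofPath (hd : IsDyck n d) : DyckWord where
  toList := stepsOfPath d n
  count_U_eq_count_D := hd.count_stepsOfPath
  count_D_le_count_U i := by
    rcases le_or_gt i (2 * n) with hi | hi
    · rw [hd.count_take_stepsOfPath hi]
      omega
    · rw [List.take_of_length_le (by simp; omega), hd.count_stepsOfPath]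

lemma semilength_ofPath (hd : IsDyck n d) : (ofPath hd).semilength = n := by
  have h : 2 * (ofPath hd).semilength = 2 * n :=
    (ofPath hd).two_mul_semilength_eq_length.trans length_stepsOfPath
  omega

lemma toPath_ofPath (hd : IsDyck n d) : (ofPath hd).toPath = d := by
  funext i
  rcases le_or_gt i (2 * n) with hi | hi
  · simp only [toPath, ofPath, hd.count_take_stepsOfPath hi]
    omega
  · rw [toPath_of_length_le (by simp [ofPath]; omega), hd.2.1 i hi.le]

lemma isDyck_toPath (hp : p.semilength = n) : IsDyck n p.toPath := by
  subst hp
  refine ⟨p.toPath_apply_zero, fun i hi => toPath_of_length_le ?_, fun i hi => ?_⟩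
  · rwa [← p.two_mul_semilength_eq_length]
  · rw [p.two_mul_semilength_eq_length] at hi
    exact (toPath_succ hi).imp And.right And.right

lemma ofPath_toPath (hp : p.semilength = n) : ofPath (isDyck_toPath hp) = p := by
  subst hp
  ext1
  refine List.ext_getElem (by simp [ofPath, p.two_mul_semilength_eq_length]) fun i _ hi => ?_
  simp only [ofPath, stepsOfPath, List.getElem_map, List.getElem_range]
  rcases toPath_succ hi with ⟨h, h'⟩ | ⟨h, h'⟩ <;> simp [h, h']

end DyckWord

open DyckWord

lemma forall_toPath_ofTree_le_iff (T : BinaryTree Unit) (m : ℕ) :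
    (∀ i, (ofTree T).toPath i ≤ m) ↔ leftHeight T ≤ m := by
  induction T generalizing m with
  | nil => simp [ofTree, leftHeight]
  | node _ l r ihl ihr =>
    rw [ofTree, forall_toPath_add_le_iff, forall_toPath_nest_le_iff, ihr, leftHeight, max_le_iff]
    refine and_congr_left' ?_
    rcases m with _ | m
    · simp
    · simp [ihl]

lemma height_toPath (p : DyckWord) : height p.toPath = leftHeight p.toTree := by
  have hbound := forall_toPath_ofTree_le_iff p.toTree
  rw [ofTree_toTree] at hbound
  have hbdd : BddAbove (Set.range p.toPath) :=
    ⟨_, Set.forall_mem_range.mpr ((hbound _).mpr le_rfl)⟩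
  refine eq_of_forall_ge_iff fun m => ?_
  rw [height, csSup_le_iff hbdd (Set.range_nonempty _), Set.forall_mem_range, hbound]

def dyckPathEquiv (n : ℕ) : {d : ℕ → ℕ // IsDyck n d} ≃ {p : DyckWord // p.semilength = n} where
  toFun d := ⟨ofPath d.2, semilength_ofPath d.2⟩
  invFun p := ⟨p.1.toPath, isDyck_toPath p.2⟩
  left_inv d := Subtype.ext (toPath_ofPath d.2)
  right_inv p := Subtype.ext (ofPath_toPath p.2)

lemma card_isDyck_eq_card_binaryTree (n : ℕ) (P : ℕ → Prop) :
    Nat.card {d : ℕ → ℕ // IsDyck n d ∧ P (height d)} =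
      Nat.card {T : BinaryTree Unit // T.numNodes = n ∧ P (leftHeight T)} := by
  refine Nat.card_congr <| (Equiv.subtypeSubtypeEquivSubtypeInter _ _).symm.trans <|
    ((dyckPathEquiv n).subtypeEquiv (q := fun p => P (leftHeight p.1.toTree)) fun d => ?_).trans <|
    (Equiv.subtypeSubtypeEquivSubtypeInter (·.semilength = n) (P <| leftHeight ·.toTree)).trans <|
    equivTree.subtypeEquiv fun p => ?_
  · conv_lhs => rw [← toPath_ofPath d.2]
    rw [height_toPath]
    simp [dyckPathEquiv]
  · simp

/-- For all `n, s ≥ 0`, the number of full binary trees with `n` internal vertices and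
Horton–Strahler number `s` equals the number of Dyck paths of length `2n` whose height `H`
satisfies `⌊log₂(1 + H)⌋ = s`. -/
theorem horton_strahler_count (n s : ℕ) :
    Nat.card {t : Set Word // IsFullBinaryTree t ∧ (internals t).ncard = n ∧ HS t = s} =
    Nat.card {d : ℕ → ℕ // IsDyck n d ∧ Nat.log 2 (1 + height d) = s} := by
  rw [card_fullBinaryTree_eq_card_binaryTree,
    card_isDyck_eq_card_binaryTree n (fun H => Nat.log 2 (1 + H) = s)]
  exact card_strahler_eq_card_leftHeight n s
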